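/- Let F : ℝ⁴ → ℝ³ be a linear map whose kernel is spanned by a vector U with η(U,U) = −1 and whose rank is 3. Set 𝔠 = Fᵗ ∘ F, χ₁ = (tr 𝔠)·id − 𝔠, σ₂ = ½((tr 𝔠)² − tr(𝔠²)), χ₂ = σ₂·id − 𝔠 ∘ χ₁, σ₃ = (1/3)·tr(𝔠 ∘ χ₂), and ω(X) = η(U,X). Then for all X, Y ∈ ℝ⁴: (1/2)σ₃·η(X,Y) − ⟨F(χ₂ X), F Y⟩ = −(1/2)σ₃·( η(X,Y) + 2·ω(X)·ω(Y) ). (This is the pointwise statement that the σ₃-stress-energy tensor has the perfect fluid form with stiff equation of state p = ρ = σ₃.) -/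
import Mathlib


open scoped BigOperators

noncomputable section

/-- The Minkowski bilinear form on `ℝ⁴`: `η(v,w) = v₁w₁ + v₂w₂ + v₃w₃ − v₄w₄`
(the fourth coordinate, index `3`, is timelike). -/
def eta (v w : Fin 4 → ℝ) : ℝ := v 0 * w 0 + v 1 * w 1 + v 2 * w 2 - v 3 * w 3

/-- The Euclidean inner product on `ℝ³`. -/
def euclid (v w : Fin 3 → ℝ) : ℝ := ∑ i, v i * w i

/-- The Cauchy–Green operator `𝔠 = Fᵗ ∘ F`. -/
def CG (F : (Fin 4 → ℝ) →ₗ[ℝ] (Fin 3 → ℝ)) (Ft : (Fin 3 → ℝ) →ₗ[ℝ] (Fin 4 → ℝ)) :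
    (Fin 4 → ℝ) →ₗ[ℝ] (Fin 4 → ℝ) := Ft ∘ₗ F

/-- Trace of an endomorphism of `ℝ⁴`. -/
def trE (c : (Fin 4 → ℝ) →ₗ[ℝ] (Fin 4 → ℝ)) : ℝ := LinearMap.trace ℝ (Fin 4 → ℝ) c

/-- The first Newton tensor `χ₁ = (tr 𝔠)·id − 𝔠`. -/
def chi1 (F : (Fin 4 → ℝ) →ₗ[ℝ] (Fin 3 → ℝ)) (Ft : (Fin 3 → ℝ) →ₗ[ℝ] (Fin 4 → ℝ)) :
    (Fin 4 → ℝ) →ₗ[ℝ] (Fin 4 → ℝ) :=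
  trE (CG F Ft) • LinearMap.id - CG F Ft

/-- The second elementary symmetric function `σ₂ = ½((tr 𝔠)² − tr(𝔠²))`. -/
def sigma2 (F : (Fin 4 → ℝ) →ₗ[ℝ] (Fin 3 → ℝ)) (Ft : (Fin 3 → ℝ) →ₗ[ℝ] (Fin 4 → ℝ)) : ℝ :=
  ((trE (CG F Ft)) ^ 2 - trE (CG F Ft ∘ₗ CG F Ft)) / 2

/-- The second Newton tensor `χ₂ = σ₂·id − 𝔠 ∘ χ₁`. -/
def chi2 (F : (Fin 4 → ℝ) →ₗ[ℝ] (Fin 3 → ℝ)) (Ft : (Fin 3 → ℝ) →ₗ[ℝ] (Fin 4 → ℝ)) :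
    (Fin 4 → ℝ) →ₗ[ℝ] (Fin 4 → ℝ) :=
  sigma2 F Ft • LinearMap.id - CG F Ft ∘ₗ chi1 F Ft

/-- The third elementary symmetric function `σ₃ = (1/3)·tr(𝔠 ∘ χ₂)`. -/
def sigma3 (F : (Fin 4 → ℝ) →ₗ[ℝ] (Fin 3 → ℝ)) (Ft : (Fin 3 → ℝ) →ₗ[ℝ] (Fin 4 → ℝ)) : ℝ :=
  trE (CG F Ft ∘ₗ chi2 F Ft) / 3

lemma cayley3 (M : Matrix (Fin 3) (Fin 3) ℝ) :
    M * M * M - M.trace • (M * M) + ((M.trace ^ 2 - (M * M).trace) / 2) • M =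
      ((M.trace ^ 3 - 3 * M.trace * (M * M).trace + 2 * (M * M * M).trace) / 6) •
        (1 : Matrix (Fin 3) (Fin 3) ℝ) := by
  ext i j
  fin_cases i <;> fin_cases j <;>
    simp [Matrix.mul_apply, Matrix.trace, Matrix.diag, Fin.sum_univ_succ, Matrix.one_apply,
      Matrix.smul_apply] <;> ring

lemma eta_symm' (v w : Fin 4 → ℝ) : eta v w = eta w v := by unfold eta; ring

lemma euclid_symm' (v w : Fin 3 → ℝ) : euclid v w = euclid w v := by
  unfold euclid; exact Finset.sum_congr rfl fun i _ => mul_comm _ _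

lemma euclid_self_zero {v : Fin 3 → ℝ} (h : euclid v v = 0) : v = 0 := by
  simp only [euclid, Fin.sum_univ_three] at h
  have h0 : v 0 = 0 := by nlinarith [mul_self_nonneg (v 0), mul_self_nonneg (v 1), mul_self_nonneg (v 2)]
  have h1 : v 1 = 0 := by nlinarith [mul_self_nonneg (v 0), mul_self_nonneg (v 1), mul_self_nonneg (v 2)]
  have h2 : v 2 = 0 := by nlinarith [mul_self_nonneg (v 0), mul_self_nonneg (v 1), mul_self_nonneg (v 2)]
  funext i
  fin_cases i
  · simpa using h0
  · simpa using h1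
  · simpa using h2

/-- the σ₃-stress-energy tensor of `F` has the perfect fluid form
with the stiff equation of state `p = ρ = σ₃`. -/
theorem statement3
    (F : (Fin 4 → ℝ) →ₗ[ℝ] (Fin 3 → ℝ)) (Ft : (Fin 3 → ℝ) →ₗ[ℝ] (Fin 4 → ℝ))
    (hadj : ∀ (v : Fin 4 → ℝ) (w : Fin 3 → ℝ), euclid (F v) w = eta v (Ft w))
    (U : Fin 4 → ℝ)
    (hker : LinearMap.ker F = Submodule.span ℝ {U})
    (hU : eta U U = -1)
    (hrank : Module.finrank ℝ (LinearMap.range F) = 3) :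
    ∀ X Y : Fin 4 → ℝ,
      (1 / 2) * sigma3 F Ft * eta X Y - euclid (F (chi2 F Ft X)) (F Y)
        = -(1 / 2) * sigma3 F Ft * (eta X Y + 2 * eta U X * eta U Y) := by
  classical
  set c : (Fin 4 → ℝ) →ₗ[ℝ] (Fin 4 → ℝ) := CG F Ft with hcdef
  set A : Matrix (Fin 3) (Fin 4) ℝ := LinearMap.toMatrix' F with hA
  set D : Matrix (Fin 4) (Fin 3) ℝ := LinearMap.toMatrix' Ft with hD
  -- basic facts
  have hFU : F U = 0 := by
    have h1 : U ∈ LinearMap.ker F := by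
      rw [hker]; exact Submodule.mem_span_singleton_self U
    exact h1
  have hcU : c U = 0 := by
    simp [hcdef, CG, hFU]
  have hee : ∀ v w, eta v (c w) = euclid (F v) (F w) := fun v w => (hadj v (F w)).symm
  have hcsymm : ∀ v w, eta (c v) w = eta v (c w) := by
    intro v w
    rw [eta_symm' (c v) w, hee w v, hee v w, euclid_symm']
  have hkerc : ∀ v, c v = 0 → ∃ t : ℝ, v = t • U := by
    intro v hv
    have h0 : euclid (F v) (F v) = 0 := by
      rw [← hee v v, hv]; simp [eta]
    have hFv : F v = 0 := euclid_self_zero h0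
    have hmem : v ∈ Submodule.span ℝ ({U} : Set (Fin 4 → ℝ)) := by
      rw [← hker]; exact hFv
    obtain ⟨t, ht⟩ := Submodule.mem_span_singleton.mp hmem
    exact ⟨t, ht.symm⟩
  -- matrix of c and traces
  have hMc : LinearMap.toMatrix' c = D * A := by
    rw [hcdef, CG, LinearMap.toMatrix'_comp]
  have hcv : ∀ v, Matrix.mulVec (D * A) v = c v := by
    intro v
    rw [← hMc, ← Matrix.toLin'_apply, Matrix.toLin'_toMatrix']
  have htr : ∀ g : (Fin 4 → ℝ) →ₗ[ℝ] (Fin 4 → ℝ), trE g = (LinearMap.toMatrix' g).trace := by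
    intro g
    rw [trE, LinearMap.trace_eq_matrix_trace ℝ (Pi.basisFun ℝ (Fin 4)) g,
      LinearMap.toMatrix_eq_toMatrix']
  set p1 : ℝ := (A * D).trace with hp1
  set p2 : ℝ := (A * D * (A * D)).trace with hp2
  set p3 : ℝ := (A * D * (A * D) * (A * D)).trace with hp3
  have h1 : trE c = p1 := by
    rw [htr, hMc, Matrix.trace_mul_comm]
  have h2 : trE (c ∘ₗ c) = p2 := by
    rw [htr, LinearMap.toMatrix'_comp, hMc]
    rw [show (D * A) * (D * A) = D * (A * (D * A)) by simp [Matrix.mul_assoc],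
      Matrix.trace_mul_comm]
    congr 1
    simp [Matrix.mul_assoc]
  have h3 : trE (c ∘ₗ c ∘ₗ c) = p3 := by
    rw [htr, LinearMap.toMatrix'_comp, LinearMap.toMatrix'_comp, hMc]
    rw [show (D * A) * ((D * A) * (D * A)) = D * (A * (D * (A * (D * A)))) by
      simp [Matrix.mul_assoc], Matrix.trace_mul_comm]
    congr 1
    simp [Matrix.mul_assoc]
  -- expansion of chi2
  have hchi2 : ∀ v, chi2 F Ft v = sigma2 F Ft • v - trE c • c v + c (c v) := by
    intro v
    simp only [chi2, chi1, ← hcdef, LinearMap.sub_apply, LinearMap.comp_apply,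
      LinearMap.smul_apply, LinearMap.id_apply, map_sub, map_smul]
    abel
  have hs2 : sigma2 F Ft = (p1 ^ 2 - p2) / 2 := by
    rw [sigma2, ← hcdef, h1, h2]
  have hexp : CG F Ft ∘ₗ chi2 F Ft = sigma2 F Ft • c - trE c • (c ∘ₗ c) + c ∘ₗ c ∘ₗ c := by
    apply LinearMap.ext
    intro v
    simp only [← hcdef, LinearMap.comp_apply, LinearMap.add_apply, LinearMap.sub_apply,
      LinearMap.smul_apply, hchi2 v, map_sub, map_add, map_smul]
  have hs3 : sigma3 F Ft = (p1 ^ 3 - 3 * p1 * p2 + 2 * p3) / 6 := by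
    rw [sigma3, trE, hexp, map_add, map_sub, map_smul, map_smul]
    rw [show (LinearMap.trace ℝ (Fin 4 → ℝ)) c = trE c from rfl,
      show (LinearMap.trace ℝ (Fin 4 → ℝ)) (c ∘ₗ c) = trE (c ∘ₗ c) from rfl,
      show (LinearMap.trace ℝ (Fin 4 → ℝ)) (c ∘ₗ c ∘ₗ c) = trE (c ∘ₗ c ∘ₗ c) from rfl]
    rw [h1, h2, h3, hs2]
    simp only [smul_eq_mul]
    ring
  -- Cayley-Hamilton for A*D, transported to c
  have hCH := cayley3 (A * D)
  rw [← hp1, ← hp2, ← hp3] at hCH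
  have hE : (D * A) * ((D * A) * ((D * A) * (D * A)))
        - p1 • ((D * A) * ((D * A) * (D * A)))
        + ((p1 ^ 2 - p2) / 2) • ((D * A) * (D * A))
      = ((p1 ^ 3 - 3 * p1 * p2 + 2 * p3) / 6) • (D * A) := by
    have h := congrArg (fun X : Matrix (Fin 3) (Fin 3) ℝ => D * X * A) hCH
    simp only [Matrix.sub_mul, Matrix.add_mul, Matrix.smul_mul, Matrix.one_mul,
      Matrix.mul_sub, Matrix.mul_add, Matrix.mul_smul, Matrix.mul_one,
      Matrix.mul_assoc] at h ⊢
    exact h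
  have hkey4 : ∀ v, c (c (c (c v))) - p1 • c (c (c v))
      + ((p1 ^ 2 - p2) / 2) • c (c v) = ((p1 ^ 3 - 3 * p1 * p2 + 2 * p3) / 6) • c v := by
    intro v
    have h := congrArg (fun M : Matrix (Fin 4) (Fin 4) ℝ => Matrix.mulVec M v) hE
    simpa only [Matrix.sub_mulVec, Matrix.add_mulVec, Matrix.smul_mulVec,
      ← Matrix.mulVec_mulVec, hcv] using h
  set s3 : ℝ := sigma3 F Ft with hs3def
  have hkey : ∀ v, c (c (chi2 F Ft v)) = s3 • c v := by
    intro v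
    rw [hchi2 v]
    simp only [map_sub, map_add, map_smul, h1, hs2, hs3]
    funext i
    have h4i := congrFun (hkey4 v) i
    simp only [Pi.add_apply, Pi.sub_apply, Pi.smul_apply, smul_eq_mul] at h4i ⊢
    linarith [h4i]
  -- the perfect fluid form of c ∘ chi2
  have hT : ∀ X, c (chi2 F Ft X) = s3 • X + (s3 * eta U X) • U := by
    intro X
    set sX : Fin 4 → ℝ := c (chi2 F Ft X) - s3 • X - (s3 * eta U X) • U with hsX
    have hcsX : c sX = 0 := by
      rw [hsX]
      simp only [map_sub, map_smul, hkey X, hcU, smul_zero]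
      abel
    obtain ⟨t, ht⟩ := hkerc sX hcsX
    have hetaTU : eta (c (chi2 F Ft X)) U = 0 := by
      rw [hcsymm, hcU]; simp [eta]
    have hetasXU : eta sX U = 0 := by
      rw [hsX]
      have e1 : eta (c (chi2 F Ft X) - s3 • X - (s3 * eta U X) • U) U
          = eta (c (chi2 F Ft X)) U - s3 * eta X U - (s3 * eta U X) * eta U U := by
        simp only [eta, Pi.sub_apply, Pi.smul_apply, smul_eq_mul]; ring
      rw [e1, hetaTU, hU, eta_symm' X U]
      ring
    have ht0 : t = 0 := by
      have h5 := hetasXU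
      rw [ht] at h5
      have e2 : eta (t • U) U = t * eta U U := by
        simp only [eta, Pi.smul_apply, smul_eq_mul]; ring
      rw [e2, hU] at h5
      linarith
    have hsX0 : sX = 0 := by rw [ht, ht0, zero_smul]
    funext i
    have h6 := congrFun hsX0 i
    simp only [hsX, Pi.sub_apply, Pi.add_apply, Pi.smul_apply, Pi.zero_apply,
      smul_eq_mul] at h6 ⊢
    linarith
  -- conclusion
  intro X Y
  have hfin : euclid (F (chi2 F Ft X)) (F Y) = s3 * eta X Y + (s3 * eta U X) * eta U Y := by
    rw [hadj (chi2 F Ft X) (F Y)]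
    rw [show Ft (F Y) = c Y from rfl, ← hcsymm, hT X]
    simp only [eta, Pi.add_apply, Pi.smul_apply, smul_eq_mul]
    ring
  rw [hfin]
  ring
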